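/- For every integer n ≥ 3 and every real x > 0, the double inequality (2n-1)/(2n+1) < T_cos (2n) x / T_sin n x < 1 holds. -/

import Mathlib

/-- The `n`-th normalized remainder of the Maclaurin series of sine. -/
noncomputable def Tsin (n : ℕ) (x : ℝ) : ℝ :=
  if x = 0 then 1
  else (-1 : ℝ) ^ n * (Nat.factorial (2 * n + 1)) / x ^ (2 * n + 1) *
    (Real.sin x - ∑ k ∈ Finset.range n, (-1 : ℝ) ^ k * x ^ (2 * k + 1) / (Nat.factorial (2 * k + 1)))

/-- The normalized remainder of the Maclaurin series of cosine; `Tcos m` is `T_cos (2m)`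
of the natural-language statement. -/
noncomputable def Tcos (m : ℕ) (x : ℝ) : ℝ :=
  if x = 0 then 1
  else (-1 : ℝ) ^ m * (Nat.factorial (2 * m)) / x ^ (2 * m) *
    (Real.cos x - ∑ k ∈ Finset.range m, (-1 : ℝ) ^ k * x ^ (2 * k) / (Nat.factorial (2 * k)))

/-!
Write `S_n` and `C_n` for the sign-normalized remainders `sinRem n` and `cosRem n`, so that
`T_sin n = (2n+1)! S_n / x^(2n+1)` and `T_cos (2n) = (2n)! C_n / x^(2n)`. The ratio is then
`x C_n / ((2n+1) S_n)`, and the two bounds say `(2n+1) S_n - x C_n > 0` and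
`(2n-1) S_n - x C_n < 0`. Since `S_n' = C_n` and `C_n' = S_{n-1}`, the function `c S_n - x C_n`
vanishes to second order at `0` and has second derivative `(c-2) S_{n-1} - x C_{n-1}`, so both
signs propagate from `n - 1` to `n` by monotonicity. Both base cases come down to
`2x + x cos x - 3 sin x > 0`, which follows from the Taylor bounds of degree 5 and 6 for `x ≤ 3`
and is trivial beyond.
-/

open Real Finset Nat

lemma pos_of_hasDerivAt_of_pos {f f' : ℝ → ℝ} {a : ℝ} (hf0 : f a = 0)
    (hf : ∀ x, HasDerivAt f (f' x) x) (hf' : ∀ x, a < x → 0 < f' x) {x : ℝ} (hx : a < x) :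
    0 < f x := by
  have hmono : StrictMonoOn f (Set.Ici a) :=
    strictMonoOn_of_hasDerivWithinAt_pos (convex_Ici a)
      (fun y _ ↦ (hf y).continuousAt.continuousWithinAt)
      (fun y _ ↦ (hf y).hasDerivWithinAt) (fun y hy ↦ hf' y (by simpa using hy))
  simpa [hf0] using hmono Set.self_mem_Ici hx.le hx

lemma pos_of_hasDerivAt_of_hasDerivAt_of_pos {f f' f'' : ℝ → ℝ} {a : ℝ} (hf0 : f a = 0)
    (hf'0 : f' a = 0) (hf : ∀ x, HasDerivAt f (f' x) x) (hf' : ∀ x, HasDerivAt f' (f'' x) x)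
    (hf'' : ∀ x, a < x → 0 < f'' x) {x : ℝ} (hx : a < x) : 0 < f x :=
  pos_of_hasDerivAt_of_pos hf0 hf (fun _ ↦ pos_of_hasDerivAt_of_pos hf'0 hf' hf'') hx

lemma hasDerivAt_pow_succ_div_factorial (m : ℕ) (x : ℝ) :
    HasDerivAt (fun y : ℝ ↦ y ^ (m + 1) / (m + 1)!) (x ^ m / m !) x := by
  refine ((hasDerivAt_pow (m + 1) x).div_const ((m + 1)! : ℝ)).congr_deriv ?_
  rw [factorial_succ]
  push_cast
  field_simp

/-- `sinRem n x = (-1)^n (sin x - ∑_{k<n} (-1)^k x^(2k+1)/(2k+1)!)` (`sinRem_eq`); the recursion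
makes the derivatives `sinRem n' = cosRem n` and `cosRem (n+1)' = sinRem n` immediate. -/
noncomputable def sinRem : ℕ → ℝ → ℝ
  | 0, x => sin x
  | n + 1, x => x ^ (2 * n + 1) / (2 * n + 1)! - sinRem n x

noncomputable def cosRem : ℕ → ℝ → ℝ
  | 0, x => cos x
  | n + 1, x => x ^ (2 * n) / (2 * n)! - cosRem n x

lemma sinRem_eq (n : ℕ) (x : ℝ) :
    sinRem n x = (-1) ^ n * (sin x - ∑ k ∈ range n, (-1) ^ k * x ^ (2 * k + 1) / (2 * k + 1)!) := by
  induction n with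
  | zero => simp [sinRem]
  | succ n ih =>
    have hsq : ((-1 : ℝ) ^ n) ^ 2 = 1 := by rw [← pow_mul, mul_comm, pow_mul, neg_one_sq, one_pow]
    rw [sinRem, ih, sum_range_succ]
    linear_combination -(x ^ (2 * n + 1) / (2 * n + 1)!) * hsq

lemma cosRem_eq (n : ℕ) (x : ℝ) :
    cosRem n x = (-1) ^ n * (cos x - ∑ k ∈ range n, (-1) ^ k * x ^ (2 * k) / (2 * k)!) := by
  induction n with
  | zero => simp [cosRem]
  | succ n ih =>
    have hsq : ((-1 : ℝ) ^ n) ^ 2 = 1 := by rw [← pow_mul, mul_comm, pow_mul, neg_one_sq, one_pow]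
    rw [cosRem, ih, sum_range_succ]
    linear_combination -(x ^ (2 * n) / (2 * n)!) * hsq

lemma sinRem_zero_right (n : ℕ) : sinRem n 0 = 0 := by
  induction n with
  | zero => simp [sinRem]
  | succ n ih => simp [sinRem, ih]

lemma cosRem_succ_zero_right (n : ℕ) : cosRem (n + 1) 0 = 0 := by
  induction n with
  | zero => simp [cosRem]
  | succ n ih => rw [cosRem, ih]; simp

lemma hasDerivAt_sinRem (n : ℕ) (x : ℝ) : HasDerivAt (sinRem n) (cosRem n x) x := by
  induction n with
  | zero => exact hasDerivAt_sin x
  | succ n ih => exact (hasDerivAt_pow_succ_div_factorial (2 * n) x).sub ih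

lemma hasDerivAt_cosRem_succ (n : ℕ) (x : ℝ) : HasDerivAt (cosRem (n + 1)) (sinRem n x) x := by
  induction n with
  | zero => simpa [cosRem, sinRem] using (hasDerivAt_cos x).const_sub 1
  | succ n ih => exact (hasDerivAt_pow_succ_div_factorial (2 * n + 1) x).sub ih

lemma sinRem_succ_pos (n : ℕ) {x : ℝ} (hx : 0 < x) : 0 < sinRem (n + 1) x := by
  induction n generalizing x with
  | zero => simpa [sinRem] using sin_lt hx
  | succ n ih =>
    exact pos_of_hasDerivAt_of_hasDerivAt_of_pos (sinRem_zero_right _)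
      (cosRem_succ_zero_right _) (hasDerivAt_sinRem _) (hasDerivAt_cosRem_succ _) (fun _ ↦ ih) hx

lemma cosRem_add_two_pos (n : ℕ) {x : ℝ} (hx : 0 < x) : 0 < cosRem (n + 2) x :=
  pos_of_hasDerivAt_of_pos (cosRem_succ_zero_right _) (hasDerivAt_cosRem_succ _)
    (fun _ ↦ sinRem_succ_pos n) hx

lemma two_mul_add_mul_cos_sub_three_mul_sin_pos {x : ℝ} (hx : 0 < x) :
    0 < 2 * x + x * cos x - 3 * sin x := by
  rcases le_or_gt x 3 with hx3 | hx3
  · have hsin := sinRem_succ_pos 2 hx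
    have hcos := cosRem_add_two_pos 2 hx
    norm_num [sinRem, cosRem, factorial] at hsin hcos
    -- the Taylor bounds leave `x⁵ (12 - x²) / 720 > 0`
    have h12 : 0 ≤ x ^ 5 * (12 - x ^ 2) := mul_nonneg (pow_pos hx 5).le (by nlinarith)
    nlinarith [mul_lt_mul_of_pos_left hcos hx]
  · nlinarith [sin_le_one x, neg_one_le_cos x]

noncomputable def sinRemComb (c : ℝ) (n : ℕ) (x : ℝ) : ℝ :=
  c * sinRem n x - x * cosRem n x

noncomputable def cosRemComb (c : ℝ) (n : ℕ) (x : ℝ) : ℝ :=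
  c * cosRem (n + 1) x - x * sinRem n x

lemma sinRemComb_succ_zero_right (c : ℝ) (n : ℕ) : sinRemComb c (n + 1) 0 = 0 := by
  simp [sinRemComb, sinRem_zero_right]

lemma cosRemComb_zero_right (c : ℝ) (n : ℕ) : cosRemComb c n 0 = 0 := by
  simp [cosRemComb, cosRem_succ_zero_right]

lemma hasDerivAt_sinRemComb (c : ℝ) (n : ℕ) (x : ℝ) :
    HasDerivAt (sinRemComb (c + 1) (n + 1)) (cosRemComb c n x) x := by
  refine (((hasDerivAt_sinRem _ x).const_mul _).sub
    ((hasDerivAt_id x).mul (hasDerivAt_cosRem_succ _ x))).congr_deriv ?_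
  simp only [cosRemComb, id]
  ring

lemma hasDerivAt_cosRemComb (c : ℝ) (n : ℕ) (x : ℝ) :
    HasDerivAt (cosRemComb (c + 1) n) (sinRemComb c n x) x := by
  refine (((hasDerivAt_cosRem_succ _ x).const_mul _).sub
    ((hasDerivAt_id x).mul (hasDerivAt_sinRem _ x))).congr_deriv ?_
  simp only [sinRemComb, id]
  ring

lemma sinRemComb_add_two_pos {c : ℝ} {n : ℕ} (h : ∀ x, 0 < x → 0 < sinRemComb c (n + 1) x)
    {x : ℝ} (hx : 0 < x) : 0 < sinRemComb (c + 2) (n + 2) x := by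
  rw [show c + 2 = c + 1 + 1 by ring]
  exact pos_of_hasDerivAt_of_hasDerivAt_of_pos (sinRemComb_succ_zero_right _ _)
    (cosRemComb_zero_right _ _) (hasDerivAt_sinRemComb _ _) (hasDerivAt_cosRemComb _ _) h hx

lemma sinRemComb_add_two_neg {c : ℝ} {n : ℕ} (h : ∀ x, 0 < x → sinRemComb c (n + 1) x < 0)
    {x : ℝ} (hx : 0 < x) : sinRemComb (c + 2) (n + 2) x < 0 := by
  rw [show c + 2 = c + 1 + 1 by ring]
  refine neg_pos.1 (pos_of_hasDerivAt_of_hasDerivAt_of_pos (f := fun y ↦ -sinRemComb _ _ y)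
    (by simp [sinRemComb_succ_zero_right]) (by simp [cosRemComb_zero_right])
    (fun y ↦ (hasDerivAt_sinRemComb _ _ y).neg) (fun y ↦ (hasDerivAt_cosRemComb _ _ y).neg)
    (fun y hy ↦ neg_pos.2 (h y hy)) hx)

lemma sinRemComb_pos (n : ℕ) {x : ℝ} (hx : 0 < x) : 0 < sinRemComb (2 * n + 3) (n + 1) x := by
  induction n generalizing x with
  | zero =>
    have := two_mul_add_mul_cos_sub_three_mul_sin_pos hx
    norm_num [sinRemComb, sinRem, cosRem]
    linarith
  | succ n ih =>
    rw [show (2 * ((n + 1 : ℕ) : ℝ) + 3) = 2 * n + 3 + 2 by push_cast; ring]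
    exact sinRemComb_add_two_pos (fun _ ↦ ih) hx

lemma sinRemComb_neg (n : ℕ) {x : ℝ} (hx : 0 < x) : sinRemComb (2 * n + 3) (n + 2) x < 0 := by
  induction n generalizing x with
  | zero =>
    have := two_mul_add_mul_cos_sub_three_mul_sin_pos hx
    norm_num [sinRemComb, sinRem, cosRem, factorial]
    linarith
  | succ n ih =>
    rw [show (2 * ((n + 1 : ℕ) : ℝ) + 3) = 2 * n + 3 + 2 by push_cast; ring]
    exact sinRemComb_add_two_neg (fun _ ↦ ih) hx

lemma Tcos_div_Tsin (n : ℕ) {x : ℝ} (hx : x ≠ 0) :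
    Tcos n x / Tsin n x = x * cosRem n x / ((2 * n + 1) * sinRem n x) := by
  have hTsin : Tsin n x = (2 * n)! / x ^ (2 * n) * ((2 * n + 1) / x * sinRem n x) := by
    rw [Tsin, if_neg hx, sinRem_eq, factorial_succ, pow_succ]
    push_cast
    field_simp
  have hTcos : Tcos n x = (2 * n)! / x ^ (2 * n) * cosRem n x := by
    rw [Tcos, if_neg hx, cosRem_eq]
    ring
  have hA : ((2 * n)! / x ^ (2 * n) : ℝ) ≠ 0 := by positivity
  rw [hTsin, hTcos, mul_div_mul_left _ _ hA, div_mul_eq_mul_div, div_div_eq_mul_div, mul_comm]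

theorem Tcos_Tsin_ratio_bounds (n : ℕ) (hn : 3 ≤ n) (x : ℝ) (hx : 0 < x) :
    (2 * (n : ℝ) - 1) / (2 * n + 1) < Tcos n x / Tsin n x ∧
    Tcos n x / Tsin n x < 1 := by
  obtain ⟨m, rfl⟩ : ∃ m, n = m + 2 := ⟨n - 2, by omega⟩
  have hsin : 0 < sinRem (m + 2) x := sinRem_succ_pos (m + 1) hx
  have hlower : sinRemComb (2 * m + 3) (m + 2) x < 0 := sinRemComb_neg m hx
  have hupper : 0 < sinRemComb (2 * (m + 1 : ℕ) + 3) (m + 2) x := sinRemComb_pos (m + 1) hx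
  rw [sinRemComb] at hlower hupper
  rw [Tcos_div_Tsin _ hx.ne', div_lt_div_iff₀ (by positivity) (by positivity),
    div_lt_one (by positivity)]
  push_cast at hupper ⊢
  constructor <;> nlinarith
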